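/- arXiv:2601.13483 — 2 statements merged into one kernel-verified Lean document; each statement's English description precedes it below -/
import Mathlib

section
/- Suppose v_i ≥ u_{i+1} for all i ∈ [n−1]. Then the poset P_𝓛 is pure if and only if both of the following hold: (a) u_k − u_i = 2(k − i) for all i, k ∈ [n] with i ≤ k such that ε_i > 1 and ε_k > 1; (b) v_k − v_i = 2(k − i) for all i, k ∈ [n] with i ≤ k such that θ_{i−1} > 1 and θ_{k−1} > 1. -/
/-!
Under `a_{i,j} ↦ (-i, j - i)` the poset `P_𝓛` becomes a finite set of lattice points of `ℤ × ℤ`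
with the product order, arranged in rows `i`, and the rank `q.1 + q.2` rises by exactly one along
every cover. So a maximal chain from a minimal `x` to a maximal `y` has `rank y - rank x + 1`
elements. The minimal elements are the left ends of the rows `i` with `ε_i > 1`, of rank
`u_i + 1 - 2i`, and the maximal ones are the right ends of the rows `k` with `θ_{k-1} > 1`, of rank
`v_k - 2k`; conditions (a) and (b) say that all minimal elements have one rank and all maximal
elements have one rank, which makes `P_𝓛` pure. Conversely, as `u_{i+1} ≤ v_i`, the left ends of
rows `i` and `i + 1` lie below the right end of row `i`; hence the minimal element at row `i` and
some minimal element at a row `> i` have a common maximal element above them, and purity forces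
their ranks to agree. Dually for maximal elements.
-/

namespace LadderPaper

/-- The tuple `a_{i,j}`: entry `t` is `u t` for `t < i` and `max (j + (t - i)) (u t)` for
`t ≥ i` (indices `t ∈ [1,n]`; entries outside `[1,n]` are set to `0`). -/
def atuple (u : ℕ → ℤ) (n i : ℕ) (j : ℤ) : ℕ → ℤ := fun t =>
  if 1 ≤ t ∧ t ≤ n then
    (if t < i then u t else max (j + ((t : ℤ) - (i : ℤ))) (u t))
  else 0

/-- The tuple `b_{i,j}`: like `a_{i,j}` but with `i`-th entry `j - 1`. -/
def btuple (u : ℕ → ℤ) (n i : ℕ) (j : ℤ) : ℕ → ℤ := fun t =>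
  if 1 ≤ t ∧ t ≤ n then
    (if t < i then u t
     else if t = i then j - 1
     else max (j + ((t : ℤ) - (i : ℤ))) (u t))
  else 0

/-- The tuple `(u_1, …, u_n)`. -/
def utuple (u : ℕ → ℤ) (n : ℕ) : ℕ → ℤ := fun t =>
  if 1 ≤ t ∧ t ≤ n then u t else 0

/-- The lattice `𝓛` of tuples `c` with `u t ≤ c t ≤ v t` for `t ∈ [1,n]`, strictly
increasing entries, and (normalization) `c t = 0` outside `[1,n]`.  It carries the
componentwise (induced product) order. -/
def ladderL (n : ℕ) (u v : ℕ → ℤ) : Set (ℕ → ℤ) :=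
  {c | (∀ t, 1 ≤ t → t ≤ n → u t ≤ c t ∧ c t ≤ v t) ∧
       (∀ t, 1 ≤ t → t + 1 ≤ n → c t < c (t + 1)) ∧
       (∀ t, t = 0 ∨ n < t → c t = 0)}

/-- The set `P_𝓛 = { a_{i,j} : i ∈ [n], j ∈ [u_i + 1, v_i] }`. -/
def PL (n : ℕ) (u v : ℕ → ℤ) : Set (ℕ → ℤ) :=
  {x | ∃ i : ℕ, ∃ j : ℤ, 1 ≤ i ∧ i ≤ n ∧ u i + 1 ≤ j ∧ j ≤ v i ∧ x = atuple u n i j}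

/-- The product poset `𝓛 × [r]`. -/
def ladderLr (n : ℕ) (u v : ℕ → ℤ) (r : ℤ) : Set ((ℕ → ℤ) × ℤ) :=
  {p | p.1 ∈ ladderL n u v ∧ 1 ≤ p.2 ∧ p.2 ≤ r}

/-- The set `P_{𝓛×[r]} = { (a_{i,j}, 1) } ∪ { ((u_1,…,u_n), k) : k ∈ [2,r] }`. -/
def PLr (n : ℕ) (u v : ℕ → ℤ) (r : ℤ) : Set ((ℕ → ℤ) × ℤ) :=
  {p | (p.1 ∈ PL n u v ∧ p.2 = 1) ∨ (p.1 = utuple u n ∧ 2 ≤ p.2 ∧ p.2 ≤ r)}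

/-- `ε_i > 1`, with the convention `ε_n > 1` (i.e. `i = n` or `u_{i+1} - u_i > 1`). -/
def epsGt1 (u : ℕ → ℤ) (n i : ℕ) : Prop := i = n ∨ 1 < u (i + 1) - u i

/-- `θ_{i-1} > 1`, with the convention `θ_0 > 1` (i.e. `i = 1` or `v_i - v_{i-1} > 1`). -/
def thetaGt1 (v : ℕ → ℤ) (i : ℕ) : Prop := i = 1 ∨ 1 < v i - v (i - 1)

/-- Membership in `C = { i ∈ [n-1] : v_i < u_{i+1} } ∪ { n }`. -/
def inC (n : ℕ) (u v : ℕ → ℤ) (i : ℕ) : Prop :=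
  (1 ≤ i ∧ i + 1 ≤ n ∧ v i < u (i + 1)) ∨ i = n

/-- The set `C = { i ∈ [n-1] : v_i < u_{i+1} } ∪ { n }`. -/
def Cset (n : ℕ) (u v : ℕ → ℤ) : Set ℕ :=
  {i | 1 ≤ i ∧ i + 1 ≤ n ∧ v i < u (i + 1)} ∪ {n}

/-- `[p,q]` is one of the blocks `[p_s, q_s]` determined by `C`: `q ∈ C`,
no element of `C` lies in `[p, q-1]`, and either `p = 1` or `p - 1 ∈ C`. -/
def IsBlock (n : ℕ) (u v : ℕ → ℤ) (p q : ℕ) : Prop :=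
  1 ≤ p ∧ p ≤ q ∧ q ≤ n ∧ inC n u v q ∧
    (∀ j, p ≤ j → j < q → ¬ inC n u v j) ∧ (p = 1 ∨ inC n u v (p - 1))

/-- `i0 = min { i ∈ [p,q] : ε_i > 1 }` (with the convention `ε_n > 1`). -/
def IsBlockMin (n : ℕ) (u : ℕ → ℤ) (p q i0 : ℕ) : Prop :=
  p ≤ i0 ∧ i0 ≤ q ∧ epsGt1 u n i0 ∧ ∀ j, p ≤ j → j < i0 → ¬ epsGt1 u n j

/-- The comparability graph of a poset: two distinct elements are adjacent
iff they are comparable. -/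
def compGraph (α : Type*) [Preorder α] : SimpleGraph α where
  Adj x y := x ≠ y ∧ (x ≤ y ∨ y ≤ x)
  symm := ⟨fun x y h => ⟨Ne.symm h.1, Or.symm h.2⟩⟩
  loopless := ⟨fun x h => h.1 rfl⟩

/-- A poset is pure if all of its maximal chains have the same cardinality
(equivalently, the same length). -/
def IsPure (α : Type*) [Preorder α] : Prop :=
  ∀ A B : Set α, IsMaxChain (· ≤ ·) A → IsMaxChain (· ≤ ·) B → A.ncard = B.ncard

lemma natCard_eq_sub_add_one_of_covBy {β : Type*} [LinearOrder β] [Finite β] {ρ : β → ℤ}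
    (hρ : StrictMono ρ) (hcov : ∀ ⦃a b⦄, a ⋖ b → ρ b = ρ a + 1) {x y : β}
    (hx : IsBot x) (hy : IsTop y) : (Nat.card β : ℤ) = ρ y - ρ x + 1 := by
  have hrange : Set.range ρ = Set.Icc (ρ x) (ρ y) := by
    refine (Set.range_subset_iff.2 fun b =>
      Set.mem_Icc.2 ⟨hρ.monotone (hx b), hρ.monotone (hy b)⟩).antisymm ?_
    intro r ⟨hxr, hry⟩
    induction r, hry using Int.leInductionDown with
    | base => exact ⟨y, rfl⟩
    | pred r hr ih =>
      obtain ⟨b, rfl⟩ := ih (by omega)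
      have hnmin : ¬ IsMin b := fun hmin => by
        have := hρ.monotone (hmin (hx b))
        dsimp only at hxr
        omega
      obtain ⟨a, hab⟩ := exists_covBy_of_wellFoundedGT hnmin
      exact ⟨a, by simp [hcov hab]⟩
  have hle : ρ x ≤ ρ y := hρ.monotone (hx y)
  rw [← Nat.card_range_of_injective hρ.injective, hrange, Nat.card_coe_set_eq,
    Set.ncard_eq_toFinset_card', Set.toFinset_Icc, Int.card_Icc]
  omega

section Graded
variable {α : Type*} [PartialOrder α] [Finite α] {ρ : α → ℤ}

theorem _root_.IsMaxChain.ncard_eq_rank_sub_add_one (hρ : StrictMono ρ)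
    (hcov : ∀ ⦃a b⦄, a ⋖ b → ρ b = ρ a + 1) {A : Set α} (hA : IsMaxChain (· ≤ ·) A)
    {x y : α} (hx : IsLeast A x) (hy : IsGreatest A y) :
    (A.ncard : ℤ) = ρ y - ρ x + 1 := by
  classical
  let s := Flag.ofIsMaxChain A hA
  exact natCard_eq_sub_add_one_of_covBy (β := s) (hρ.comp (Subtype.strictMono_coe _))
    (fun a b hab => hcov (Flag.coe_covBy_coe.2 hab)) (x := ⟨x, hx.1⟩) (y := ⟨y, hy.1⟩)
    (fun b => hx.2 b.2) (fun b => hy.2 b.2)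

theorem _root_.IsMaxChain.exists_isLeast_isGreatest {A : Set α} (hA : IsMaxChain (· ≤ ·) A)
    (hne : A.Nonempty) : ∃ x y, IsLeast A x ∧ IsGreatest A y ∧ IsMin x ∧ IsMax y := by
  classical
  let s := Flag.ofIsMaxChain A hA
  have : Nonempty s := hne.to_subtype
  obtain ⟨x, hx⟩ := Finite.exists_min (id : s → s)
  obtain ⟨y, hy⟩ := Finite.exists_max (id : s → s)
  refine ⟨x, y, ⟨x.2, fun b hb => hx ⟨b, hb⟩⟩, ⟨y.2, fun b hb => hy ⟨b, hb⟩⟩,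
    Flag.isMin_coe.2 fun b _ => hx b, Flag.isMax_coe.2 fun b _ => hy b⟩

variable (hρ : StrictMono ρ) (hcov : ∀ ⦃a b⦄, a ⋖ b → ρ b = ρ a + 1)
include hρ hcov

theorem exists_isMaxChain_ncard_eq {x y : α} (hx : IsMin x) (hy : IsMax y) (hxy : x ≤ y) :
    ∃ A : Set α, IsMaxChain (· ≤ ·) A ∧ (A.ncard : ℤ) = ρ y - ρ x + 1 := by
  obtain ⟨A, hA, hxyA⟩ := (IsChain.pair hxy).exists_maxChain
  have hxA : x ∈ A := hxyA (by simp)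
  have hyA : y ∈ A := hxyA (by simp)
  refine ⟨A, hA, hA.ncard_eq_rank_sub_add_one hρ hcov ⟨hxA, fun w hw => ?_⟩ ⟨hyA, fun w hw => ?_⟩⟩
  · exact (hA.1.total hxA hw).elim id fun h => hx h
  · exact (hA.1.total hw hyA).elim id fun h => hy h

theorem IsPure.rank_sub_eq (hp : IsPure α) {x y x' y' : α} (hx : IsMin x) (hy : IsMax y)
    (hxy : x ≤ y) (hx' : IsMin x') (hy' : IsMax y') (hxy' : x' ≤ y') :
    ρ y - ρ x = ρ y' - ρ x' := by
  obtain ⟨A, hA, hAcard⟩ := exists_isMaxChain_ncard_eq hρ hcov hx hy hxy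
  obtain ⟨B, hB, hBcard⟩ := exists_isMaxChain_ncard_eq hρ hcov hx' hy' hxy'
  have := hp A B hA hB
  omega

theorem IsPure.rank_eq_of_isMin (hp : IsPure α) {x x' z : α} (hx : IsMin x) (hx' : IsMin x')
    (hxz : x ≤ z) (hx'z : x' ≤ z) : ρ x = ρ x' := by
  obtain ⟨y, hzy, hy⟩ := Finite.exists_le_maximal (p := fun _ => True) (a := z) trivial
  have := hp.rank_sub_eq hρ hcov hx (maximal_true.1 hy) (hxz.trans hzy) hx'
    (maximal_true.1 hy) (hx'z.trans hzy)
  omega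

theorem IsPure.rank_eq_of_isMax (hp : IsPure α) {y y' z : α} (hy : IsMax y) (hy' : IsMax y')
    (hzy : z ≤ y) (hzy' : z ≤ y') : ρ y = ρ y' := by
  obtain ⟨x, hxz, hx⟩ := Finite.exists_le_minimal (p := fun _ => True) (a := z) trivial
  have := hp.rank_sub_eq hρ hcov (minimal_true.1 hx) hy (hxz.trans hzy) (minimal_true.1 hx)
    hy' (hxz.trans hzy')
  omega

theorem isPure_of_rank_eq (r₀ r₁ : ℤ) (h₀ : ∀ x, IsMin x → ρ x = r₀)
    (h₁ : ∀ y, IsMax y → ρ y = r₁) : IsPure α := by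
  intro A B hA hB
  rcases isEmpty_or_nonempty α with hα | hα
  · simp [Set.eq_empty_of_isEmpty A, Set.eq_empty_of_isEmpty B]
  obtain ⟨x, y, hx, hy, hxm, hym⟩ := hA.exists_isLeast_isGreatest (hA.nonempty_iff.1 hα)
  obtain ⟨x', y', hx', hy', hxm', hym'⟩ := hB.exists_isLeast_isGreatest (hB.nonempty_iff.1 hα)
  have hAcard := hA.ncard_eq_rank_sub_add_one hρ hcov hx hy
  have hBcard := hB.ncard_eq_rank_sub_add_one hρ hcov hx' hy'
  rw [h₀ x hxm, h₁ y hym] at hAcard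
  rw [h₀ x' hxm', h₁ y' hym'] at hBcard
  omega

end Graded

theorem IsPure.of_orderIso {α β : Type*} [Preorder α] [Preorder β] (e : α ≃o β)
    (h : IsPure α) : IsPure β := fun A B hA hB => by
  have := h _ _ (hA.image e.symm) (hB.image e.symm)
  rwa [Set.ncard_image_of_injective _ e.symm.injective,
    Set.ncard_image_of_injective _ e.symm.injective] at this

theorem isPure_congr {α β : Type*} [Preorder α] [Preorder β] (e : α ≃o β) :
    IsPure α ↔ IsPure β :=
  ⟨.of_orderIso e, .of_orderIso e.symm⟩

section Ladder
variable {n : ℕ} {u v : ℕ → ℤ}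

theorem sub_le_sub_of_forall_lt_succ {w : ℕ → ℤ}
    (hw : ∀ i, 1 ≤ i → i + 1 ≤ n → w i < w (i + 1)) {s t : ℕ} (hs : 1 ≤ s) (hst : s ≤ t)
    (ht : t ≤ n) : w s - s ≤ w t - t := by
  induction t, hst using Nat.le_induction with
  | base => exact le_rfl
  | succ t hst ih =>
    have := hw t (by omega) ht
    have := ih (by omega)
    push_cast
    omega

theorem atuple_le_atuple_iff {i i' : ℕ} {j j' : ℤ} (hi : 1 ≤ i) (hin : i ≤ n) (hj : u i < j) :
    atuple u n i j ≤ atuple u n i' j' ↔ i' ≤ i ∧ j - i ≤ j' - i' := by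
  constructor
  · intro h
    have hii := h i
    simp only [atuple, hi, hin, and_self, if_true, lt_irrefl, if_false] at hii
    split_ifs at hii <;> omega
  · rintro ⟨hii, hjj⟩ t
    simp only [atuple]
    split_ifs <;> omega

/-- `a_{i,j} ↦ (-i, j - i)` turns the componentwise order on `P_𝓛` into the product order. -/
def coordPL (n : ℕ) (u v : ℕ → ℤ) : Set (ℤ × ℤ) :=
  {q | ∃ i : ℕ, 1 ≤ i ∧ i ≤ n ∧ q.1 = -i ∧ u i + 1 - i ≤ q.2 ∧ q.2 ≤ v i - i}

instance : Finite (coordPL n u v) := by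
  refine Set.Finite.to_subtype (Set.Finite.subset ((Finset.Icc 1 n).finite_toSet.biUnion
    fun i _ => (Set.finite_singleton (-(i : ℤ))).prod (Set.finite_Icc (u i + 1 - i) (v i - i))) ?_)
  rintro ⟨a, b⟩ ⟨i, hi, hin, rfl, hb, hb'⟩
  simp only [Set.mem_iUnion, Set.mem_prod, Set.mem_singleton_iff, Set.mem_Icc]
  exact ⟨i, by simp [hi, hin], rfl, hb, hb'⟩

theorem atuple_mem_PL {q : ℤ × ℤ} (hq : q ∈ coordPL n u v) :
    atuple u n (-q.1).toNat (q.2 - q.1) ∈ PL n u v := by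
  obtain ⟨i, hi, hin, hq1, hq2, hq2'⟩ := hq
  exact ⟨i, q.2 - q.1, hi, hin, by omega, by omega, by rw [hq1, neg_neg, Int.toNat_natCast]⟩

def coordPLToPL (q : coordPL n u v) : PL n u v :=
  ⟨atuple u n (-q.1.1).toNat (q.1.2 - q.1.1), atuple_mem_PL q.2⟩

theorem coordPLToPL_le_iff (p q : coordPL n u v) : coordPLToPL p ≤ coordPLToPL q ↔ p ≤ q := by
  obtain ⟨⟨a, b⟩, i, hi, hin, ha : a = -i, hb, -⟩ := p
  obtain ⟨⟨a', b'⟩, i', -, -, ha' : a' = -i', -, -⟩ := q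
  subst ha ha'
  simp only [coordPLToPL, ← Subtype.coe_le_coe, neg_neg, Int.toNat_natCast]
  rw [atuple_le_atuple_iff hi hin (by omega), Prod.mk_le_mk]
  omega

theorem coordPLToPL_surjective : Function.Surjective (coordPLToPL (n := n) (u := u) (v := v)) := by
  rintro ⟨_, i, j, hi, hin, hj, hj', rfl⟩
  refine ⟨⟨(-i, j - i), i, hi, hin, rfl, by omega, by omega⟩, ?_⟩
  simp [coordPLToPL]

noncomputable def coordPLIso (n : ℕ) (u v : ℕ → ℤ) : coordPL n u v ≃o PL n u v :=
  .ofSurjective (.ofMapLEIff coordPLToPL coordPLToPL_le_iff) coordPLToPL_surjective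


def coordRank (q : coordPL n u v) : ℤ := q.1.1 + q.1.2

theorem strictMono_coordRank : StrictMono (coordRank (n := n) (u := u) (v := v)) :=
  fun p q h => by
    have := Prod.lt_iff.1 (Subtype.coe_lt_coe.2 h)
    simp only [coordRank]
    omega

/-- If `rank q ≥ rank p + 2`, the next point in the row `i` of `p`, or else the point of row
`i - 1` in the same column, lies strictly between `p` and `q`. -/
theorem coordRank_covBy (humono : ∀ i, 1 ≤ i → i + 1 ≤ n → u i < u (i + 1))
    (hvmono : ∀ i, 1 ≤ i → i + 1 ≤ n → v i < v (i + 1)) ⦃p q : coordPL n u v⦄ (h : p ⋖ q) :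
    coordRank q = coordRank p + 1 := by
  obtain ⟨⟨a, b⟩, i, hi, hin, ha : a = -i, hb, hb'⟩ := p
  obtain ⟨⟨a', b'⟩, i', hi', hin', ha' : a' = -i', hc, hc'⟩ := q
  subst ha ha'
  have hpq := Prod.lt_iff.1 (Subtype.coe_lt_coe.2 h.1)
  simp only [coordRank] at hpq ⊢
  by_contra hne
  have hR := sub_le_sub_of_forall_lt_succ hvmono hi' (show i' ≤ i by omega) hin
  by_cases hcol : b < b' ∧ b + 1 ≤ v i - i
  · refine h.2 (c := ⟨(-i, b + 1), i, hi, hin, rfl, by omega, hcol.2⟩) ?_ ?_ <;>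
      exact Subtype.mk_lt_mk.2 (Prod.lt_iff.2 (by omega))
  · have hL := sub_le_sub_of_forall_lt_succ humono (s := i - 1) (t := i) (by omega) (by omega) hin
    have hR' := sub_le_sub_of_forall_lt_succ hvmono (s := i') (t := i - 1) hi' (by omega) (by omega)
    refine h.2 (c := ⟨(-(i - 1 : ℕ), b), i - 1, by omega, by omega, rfl, by omega, by omega⟩) ?_ ?_ <;>
      exact Subtype.mk_lt_mk.2 (Prod.lt_iff.2 (by omega))

theorem isMin_iff_epsGt1 (humono : ∀ i, 1 ≤ i → i + 1 ≤ n → u i < u (i + 1))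
    (huv : ∀ i, 1 ≤ i → i ≤ n → u i < v i) {x : coordPL n u v} :
    IsMin x ↔ ∃ i : ℕ, 1 ≤ i ∧ i ≤ n ∧ x.1 = (-(i : ℤ), u i + 1 - i) ∧ epsGt1 u n i := by
  obtain ⟨⟨a, b⟩, i, hi, hin, ha : a = -i, hb, hb'⟩ := x
  subst ha
  constructor
  · intro hmin
    have hb_eq : b = u i + 1 - i := by
      by_contra hne
      have := Prod.mk_le_mk.1 (Subtype.mk_le_mk.1 (@hmin ⟨(-i, b - 1), i, hi, hin, rfl, by omega,
        by omega⟩ (Subtype.mk_le_mk.2 (Prod.mk_le_mk.2 ⟨le_rfl, by omega⟩))))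
      omega
    refine ⟨i, hi, hin, Prod.ext rfl hb_eq, ?_⟩
    by_contra hε
    simp only [epsGt1, not_or, not_lt] at hε
    have := humono i hi (by omega)
    have := huv (i + 1) (by omega) (by omega)
    have := Prod.mk_le_mk.1 (Subtype.mk_le_mk.1 (@hmin ⟨(-(i + 1 : ℕ), b), i + 1, by omega,
      by omega, rfl, by omega, by omega⟩ (Subtype.mk_le_mk.2 (Prod.mk_le_mk.2 ⟨by omega, le_rfl⟩))))
    omega
  · rintro ⟨i₀, -, -, hx, hε⟩ z hle
    obtain ⟨k, hk, hkn, hc, hd, -⟩ := z.2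
    simp only [Prod.mk.injEq, neg_inj, Nat.cast_inj] at hx
    obtain ⟨rfl, rfl⟩ := hx
    have hkd := Prod.le_def.1 (Subtype.coe_le_coe.2 hle)
    refine Subtype.coe_le_coe.1 (Prod.le_def.2 ?_)
    dsimp only at hkd ⊢
    by_cases hki : k = i
    · subst hki
      omega
    have hε' : 1 < u (i + 1) - u i := hε.resolve_left (by omega)
    have := sub_le_sub_of_forall_lt_succ humono (s := i + 1) (t := k) (by omega) (by omega) hkn
    omega

theorem isMax_iff_thetaGt1 (hvmono : ∀ i, 1 ≤ i → i + 1 ≤ n → v i < v (i + 1))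
    (huv : ∀ i, 1 ≤ i → i ≤ n → u i < v i) {x : coordPL n u v} :
    IsMax x ↔ ∃ k : ℕ, 1 ≤ k ∧ k ≤ n ∧ x.1 = (-(k : ℤ), v k - k) ∧ thetaGt1 v k := by
  obtain ⟨⟨a, b⟩, k, hk, hkn, ha : a = -k, hb, hb'⟩ := x
  subst ha
  constructor
  · intro hmax
    have hb_eq : b = v k - k := by
      by_contra hne
      have := Prod.mk_le_mk.1 (Subtype.mk_le_mk.1 (@hmax ⟨(-k, b + 1), k, hk, hkn, rfl, by omega,
        by omega⟩ (Subtype.mk_le_mk.2 (Prod.mk_le_mk.2 ⟨le_rfl, by omega⟩))))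
      omega
    refine ⟨k, hk, hkn, Prod.ext rfl hb_eq, ?_⟩
    by_contra hθ
    simp only [thetaGt1, not_or, not_lt] at hθ
    have : v (k - 1) < v k := by
      simpa [Nat.sub_add_cancel hk] using hvmono (k - 1) (by omega) (by omega)
    have := huv (k - 1) (by omega) (by omega)
    have := Prod.mk_le_mk.1 (Subtype.mk_le_mk.1 (@hmax ⟨(-(k - 1 : ℕ), b), k - 1, by omega,
      by omega, rfl, by omega, by omega⟩ (Subtype.mk_le_mk.2 (Prod.mk_le_mk.2 ⟨by omega, le_rfl⟩))))
    omega
  · rintro ⟨k₀, -, -, hx, hθ⟩ z hle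
    obtain ⟨i, hi, hin, hc, -, hd⟩ := z.2
    simp only [Prod.mk.injEq, neg_inj, Nat.cast_inj] at hx
    obtain ⟨rfl, rfl⟩ := hx
    have hid := Prod.le_def.1 (Subtype.coe_le_coe.2 hle)
    refine Subtype.coe_le_coe.1 (Prod.le_def.2 ?_)
    dsimp only at hid ⊢
    by_cases hik : i = k
    · subst hik
      omega
    have hθ' : 1 < v k - v (k - 1) := hθ.resolve_left (by omega)
    have := sub_le_sub_of_forall_lt_succ hvmono (s := i) (t := k - 1) hi (by omega) (by omega)
    omega

end Ladder

section Purity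
variable {n : ℕ} {u v : ℕ → ℤ}
  (humono : ∀ i, 1 ≤ i → i + 1 ≤ n → u i < u (i + 1))
  (hvmono : ∀ i, 1 ≤ i → i + 1 ≤ n → v i < v (i + 1))
  (huv : ∀ i, 1 ≤ i → i ≤ n → u i < v i)
  (hcn : ∀ i, 1 ≤ i → i + 1 ≤ n → u (i + 1) ≤ v i)
include humono hvmono huv hcn

theorem IsPure.sub_two_mul_eq_of_epsGt1 (hp : IsPure (coordPL n u v)) {i : ℕ} (hi : 1 ≤ i)
    (hin : i ≤ n) (hε : epsGt1 u n i) : u i - 2 * i = u n - 2 * n := by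
  induction h : n - i using Nat.strong_induction_on generalizing i with
  | _ d ih =>
  rcases hin.eq_or_lt with rfl | hlt
  · rfl
  have huv_i := huv i hi hin
  have huv_succ := huv (i + 1) (by omega) hlt
  have hcn_i := hcn i hi hlt
  let x : coordPL n u v := ⟨(-i, u i + 1 - i), i, hi, hin, rfl, le_rfl, by omega⟩
  let p : coordPL n u v := ⟨(-(i + 1 : ℕ), u (i + 1) + 1 - (i + 1 : ℕ)), i + 1, by omega, hlt, rfl,
    le_rfl, by omega⟩
  let q : coordPL n u v := ⟨(-i, v i - i), i, hi, hin, rfl, by omega, le_rfl⟩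
  have hxq : x ≤ q := Subtype.mk_le_mk.2 (Prod.mk_le_mk.2 ⟨le_rfl, by omega⟩)
  have hpq : p ≤ q := Subtype.mk_le_mk.2 (Prod.mk_le_mk.2 ⟨by omega, by push_cast; omega⟩)
  obtain ⟨x', hx'p, hx'⟩ := Finite.exists_le_minimal (p := fun _ => True) (a := p) trivial
  obtain ⟨i', hi', hi'n, hx'eq, hε'⟩ := (isMin_iff_epsGt1 humono huv).1 (minimal_true.1 hx')
  have hrank := hp.rank_eq_of_isMin strictMono_coordRank (coordRank_covBy humono hvmono)
    ((isMin_iff_epsGt1 humono huv).2 ⟨i, hi, hin, rfl, hε⟩) (minimal_true.1 hx') hxq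
    (hx'p.trans hpq)
  have hii' : -(i' : ℤ) ≤ -((i + 1 : ℕ) : ℤ) := by
    simpa [hx'eq, p] using (Prod.le_def.1 (Subtype.coe_le_coe.2 hx'p)).1
  simp only [coordRank, hx'eq, x] at hrank
  have := ih (n - i') (by omega) hi' hi'n hε' rfl
  omega

theorem IsPure.sub_two_mul_eq_of_thetaGt1 (hp : IsPure (coordPL n u v)) {k : ℕ} (hk : 1 ≤ k)
    (hkn : k ≤ n) (hθ : thetaGt1 v k) : v k - 2 * k = v 1 - 2 := by
  induction k using Nat.strong_induction_on with
  | _ k ih =>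
  rcases hk.eq_or_lt with rfl | hlt
  · rfl
  have huv_k := huv k hk hkn
  have huv_pred := huv (k - 1) (by omega) (by omega)
  have hcn_pred : u k ≤ v (k - 1) := by
    simpa [Nat.sub_add_cancel hk] using hcn (k - 1) (by omega) (by omega)
  let y : coordPL n u v := ⟨(-k, v k - k), k, hk, hkn, rfl, by omega, le_rfl⟩
  let p : coordPL n u v := ⟨(-k, u k + 1 - k), k, hk, hkn, rfl, le_rfl, by omega⟩
  let q : coordPL n u v := ⟨(-(k - 1 : ℕ), v (k - 1) - (k - 1 : ℕ)), k - 1, by omega, by omega,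
    rfl, by omega, le_rfl⟩
  have hpy : p ≤ y := Subtype.mk_le_mk.2 (Prod.mk_le_mk.2 ⟨le_rfl, by omega⟩)
  have hpq : p ≤ q := Subtype.mk_le_mk.2 (Prod.mk_le_mk.2 ⟨by omega, by omega⟩)
  obtain ⟨y', hqy', hy'⟩ := Finite.exists_le_maximal (p := fun _ => True) (a := q) trivial
  obtain ⟨k', hk', hk'n, hy'eq, hθ'⟩ := (isMax_iff_thetaGt1 hvmono huv).1 (maximal_true.1 hy')
  have hrank := hp.rank_eq_of_isMax strictMono_coordRank (coordRank_covBy humono hvmono)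
    ((isMax_iff_thetaGt1 hvmono huv).2 ⟨k, hk, hkn, rfl, hθ⟩) (maximal_true.1 hy') hpy
    (hpq.trans hqy')
  have hk'k : -((k - 1 : ℕ) : ℤ) ≤ -(k' : ℤ) := by
    simpa [hy'eq, q] using (Prod.le_def.1 (Subtype.coe_le_coe.2 hqy')).1
  simp only [coordRank, hy'eq, y] at hrank
  have := ih k' (by omega) hk' hk'n hθ'
  omega

end Purity

theorem stmt12_general
    (n : ℕ) (u v : ℕ → ℤ)
    (humono : ∀ i, 1 ≤ i → i + 1 ≤ n → u i < u (i + 1))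
    (hvmono : ∀ i, 1 ≤ i → i + 1 ≤ n → v i < v (i + 1))
    (huv : ∀ i, 1 ≤ i → i ≤ n → u i < v i)
    (hcn : ∀ i, 1 ≤ i → i + 1 ≤ n → u (i + 1) ≤ v i) :
    IsPure ↥(PL n u v) ↔
      ((∀ i k : ℕ, 1 ≤ i → i ≤ k → k ≤ n → epsGt1 u n i → epsGt1 u n k →
          u k - u i = 2 * ((k : ℤ) - (i : ℤ))) ∧
       (∀ i k : ℕ, 1 ≤ i → i ≤ k → k ≤ n → thetaGt1 v i → thetaGt1 v k →
          v k - v i = 2 * ((k : ℤ) - (i : ℤ)))) := by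
  rw [← isPure_congr (coordPLIso n u v)]
  constructor
  · intro hp
    refine ⟨fun i k hi hik hkn hεi hεk => ?_, fun i k hi hik hkn hθi hθk => ?_⟩
    · have := hp.sub_two_mul_eq_of_epsGt1 humono hvmono huv hcn hi (hik.trans hkn) hεi
      have := hp.sub_two_mul_eq_of_epsGt1 humono hvmono huv hcn (hi.trans hik) hkn hεk
      omega
    · have := hp.sub_two_mul_eq_of_thetaGt1 humono hvmono huv hcn hi (hik.trans hkn) hθi
      have := hp.sub_two_mul_eq_of_thetaGt1 humono hvmono huv hcn (hi.trans hik) hkn hθk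
      omega
  · rintro ⟨hu, hv⟩
    refine isPure_of_rank_eq strictMono_coordRank (coordRank_covBy humono hvmono)
      (u n + 1 - 2 * n) (v 1 - 2) (fun x hx => ?_) (fun y hy => ?_)
    · obtain ⟨i, hi, hin, hxi, hε⟩ := (isMin_iff_epsGt1 humono huv).1 hx
      have := hu i n hi hin le_rfl hε (Or.inl rfl)
      simp only [coordRank, hxi]
      omega
    · obtain ⟨k, hk, hkn, hyk, hθ⟩ := (isMax_iff_thetaGt1 hvmono huv).1 hy
      have := hv 1 k le_rfl hk hkn (Or.inl rfl) hθ
      simp only [coordRank, hyk]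
      omega

theorem stmt12
    (n m : ℕ) (u v : ℕ → ℤ)
    (hn : 1 ≤ n) (hnm : n < m)
    (hu1 : u 1 = 1)
    (humono : ∀ i, 1 ≤ i → i + 1 ≤ n → u i < u (i + 1))
    (hum : u n < (m : ℤ))
    (hv1 : 1 < v 1)
    (hvmono : ∀ i, 1 ≤ i → i + 1 ≤ n → v i < v (i + 1))
    (hvn : v n = (m : ℤ))
    (huv : ∀ i, 1 ≤ i → i ≤ n → u i < v i)
    (hstep : ∀ i, 1 ≤ i → i + 1 ≤ n → u (i + 1) ≤ v i + 1)
    (hcn : ∀ i, 1 ≤ i → i + 1 ≤ n → u (i + 1) ≤ v i) :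
    IsPure ↥(PL n u v) ↔
      ((∀ i k : ℕ, 1 ≤ i → i ≤ k → k ≤ n → epsGt1 u n i → epsGt1 u n k →
          u k - u i = 2 * ((k : ℤ) - (i : ℤ))) ∧
       (∀ i k : ℕ, 1 ≤ i → i ≤ k → k ≤ n → thetaGt1 v i → thetaGt1 v k →
          v k - v i = 2 * ((k : ℤ) - (i : ℤ)))) :=
  stmt12_general n u v humono hvmono huv hcn

end LadderPaper
end

section
/- Suppose v_i ≥ u_{i+1} for all i ∈ [n−1]. Then the poset P_𝓛 is pure if and only if both of the following hold: (a) for every i ∈ [n−1] with ε_i > 1, one has i + ε_i − 1 ≤ n, ε_j = 1 for every j with i < j < i + ε_i − 1, and either i + ε_i − 1 = n or ε_{i+ε_i−1} > 1; (b) for every i ∈ [n−1] with θ_i > 1, one has i − θ_i + 1 ≥ 0, θ_j = 1 for every j with i − θ_i + 1 < j < i, and either i − θ_i + 1 = 0 or θ_{i−θ_i+1} > 1. -/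
/-!
Grade `P_𝓛` by `ρ(a_{i,j}) = j - 2i`. Between two comparable elements whose ranks differ by at
least two there is always a third one, so covers raise `ρ` by exactly one and a maximal chain from
a minimal element `a` to a maximal element `b` has `ρ b - ρ a + 1` elements. The minimal elements
are the `a_{p, u_p + 1}` with `ε_p > 1` and the maximal ones the `a_{q, v_q}` with `θ_{q-1} > 1`;
hence `P_𝓛` is pure iff `(2p - u_p) + (v_q - 2q)` is the same for all comparable such pairs.
Condition (a) makes `2p - u_p` constant on `{p : ε_p > 1}`: from such a `p` a run of unit steps
leads to the next one, `ε_p - 1` places further. Condition (b) does the same for `v_q - 2q`.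
Conversely, comparing two pairs that share their maximal (resp. minimal) end, which are comparable
because `u_{i+1} ≤ v_i`, forces the length of each run, i.e. (a) and (b).
-/

namespace LadderPaper

section Graded

variable {α : Type*} [PartialOrder α] [GradeOrder ℤ α]

theorem exists_grade_eq_of_le [IsStronglyAtomic α] {a b : α} (hab : a ≤ b) {r : ℤ}
    (hr : r ∈ Set.Icc (grade ℤ a) (grade ℤ b)) : ∃ x, a ≤ x ∧ x ≤ b ∧ grade ℤ x = r := by
  obtain ⟨har, hrb⟩ := hr
  induction r, har using Int.leInduction with
  | base => exact ⟨a, le_rfl, hab, rfl⟩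
  | succ r _ ih =>
    obtain ⟨x, hax, hxb, rfl⟩ := ih (by omega)
    have hxb' : x < b := lt_of_le_of_ne hxb (by rintro rfl; omega)
    obtain ⟨y, hxy, hyb⟩ := exists_covBy_le_of_lt hxb'
    exact ⟨y, hax.trans hxy.le, hyb, (Order.covBy_iff_add_one_eq.mp (hxy.grade ℤ)).symm⟩

variable [Finite α]

theorem _root_.Flag.ncard_eq_grade_sub_add_one (s : Flag α) {a b : s}
    (ha : IsBot a) (hb : IsTop b) :
    ((s : Set α).ncard : ℤ) = grade ℤ (b : α) - grade ℤ (a : α) + 1 := by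
  have hbij : Set.BijOn (grade ℤ) (s : Set α) (Set.Icc (grade ℤ (a : α)) (grade ℤ (b : α))) := by
    refine ⟨fun x hx => ⟨grade_mono (ha ⟨x, hx⟩), grade_mono (hb ⟨x, hx⟩)⟩,
      fun x hx y hy hxy => ?_, fun r hr => ?_⟩
    · by_contra hne
      rcases s.le_or_le hx hy with h | h
      · exact (grade_strictMono (lt_of_le_of_ne h hne)).ne hxy
      · exact (grade_strictMono (lt_of_le_of_ne h (Ne.symm hne))).ne hxy.symm
    · obtain ⟨x, -, -, hx⟩ := exists_grade_eq_of_le (ha b) hr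
      exact ⟨x, x.2, hx⟩
  have hab : grade ℤ (a : α) ≤ grade ℤ (b : α) := grade_mono (ha b)
  rw [hbij.ncard_eq, Set.ncard_eq_toFinset_card', Set.toFinset_Icc, Int.card_Icc]
  omega

theorem _root_.Flag.exists_ncard_eq [Nonempty α] (s : Flag α) :
    ∃ a b : α, IsMin a ∧ IsMax b ∧ a ≤ b ∧ ((s : Set α).ncard : ℤ) = grade ℤ b - grade ℤ a + 1 := by
  classical
  have : Nonempty s := (s.maxChain.nonempty_iff.mp ‹_›).to_subtype
  obtain ⟨a, ha⟩ := Finite.exists_min (id : s → s)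
  obtain ⟨b, hb⟩ := Finite.exists_max (id : s → s)
  exact ⟨a, b, Flag.isMin_coe.mpr (IsBot.isMin ha), Flag.isMax_coe.mpr (IsTop.isMax hb), ha b,
    s.ncard_eq_grade_sub_add_one ha hb⟩

theorem exists_flag_ncard_eq {a b : α} (ha : IsMin a) (hb : IsMax b) (hab : a ≤ b) :
    ∃ s : Flag α, ((s : Set α).ncard : ℤ) = grade ℤ b - grade ℤ a + 1 := by
  classical
  have hchain : IsChain (· ≤ ·) ({a, b} : Set α) :=
    Set.subsingleton_singleton.isChain.insert fun _ hc _ => Or.inl (hc ▸ hab)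
  obtain ⟨M, hM, habM⟩ := hchain.exists_maxChain
  let s := Flag.ofIsMaxChain M hM
  let a' : s := ⟨a, habM (Set.mem_insert a _)⟩
  let b' : s := ⟨b, habM (Set.mem_insert_of_mem a rfl)⟩
  have ha' : IsBot a' := fun _ => not_lt.mp (Flag.isMin_coe.mp ha).not_lt
  have hb' : IsTop b' := fun _ => not_lt.mp (Flag.isMax_coe.mp hb).not_lt
  exact ⟨s, s.ncard_eq_grade_sub_add_one ha' hb'⟩

theorem isPure_iff_grade_sub_eq :
    IsPure α ↔ ∀ a b c d : α, IsMin a → IsMax b → a ≤ b → IsMin c → IsMax d → c ≤ d →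
      grade ℤ b - grade ℤ a = grade ℤ d - grade ℤ c := by
  constructor
  · intro hpure a b c d ha hb hab hc hd hcd
    obtain ⟨s, hs⟩ := exists_flag_ncard_eq ha hb hab
    obtain ⟨t, ht⟩ := exists_flag_ncard_eq hc hd hcd
    have := hpure s t s.maxChain t.maxChain
    omega
  · intro h A B hA hB
    cases isEmpty_or_nonempty α
    · simp [Set.eq_empty_of_isEmpty A, Set.eq_empty_of_isEmpty B]
    obtain ⟨a, b, ha, hb, hab, hA'⟩ := (Flag.ofIsMaxChain A hA).exists_ncard_eq
    obtain ⟨c, d, hc, hd, hcd, hB'⟩ := (Flag.ofIsMaxChain B hB).exists_ncard_eq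
    have := h a b c d ha hb hab hc hd hcd
    simp only [Flag.coe_ofIsMaxChain] at hA' hB'
    omega

end Graded

section Sequences

variable {n : ℕ} {u : ℕ → ℤ}

theorem sub_le_sub_of_increasing (hmono : ∀ i, 1 ≤ i → i + 1 ≤ n → u i < u (i + 1))
    {a b : ℕ} (ha : 1 ≤ a) (hab : a ≤ b) (hbn : b ≤ n) : u a - a ≤ u b - b := by
  induction b, hab using Nat.le_induction with
  | base => rfl
  | succ b hab ih =>
    have := hmono b (ha.trans hab) hbn
    have := ih (by omega)
    push_cast
    omega

theorem sub_eq_sub_of_unit_steps {a b : ℕ} (hab : a ≤ b)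
    (h : ∀ j, a ≤ j → j < b → u (j + 1) - u j = 1) : u b - b = u a - a := by
  induction b, hab using Nat.le_induction with
  | base => rfl
  | succ b hab ih =>
    have := h b hab (by omega)
    have := ih fun j hj hjb => h j hj (by omega)
    push_cast
    omega

theorem exists_epsGt1_ge (hmono : ∀ i, 1 ≤ i → i + 1 ≤ n → u i < u (i + 1))
    {i : ℕ} (hi : 1 ≤ i) (hin : i ≤ n) :
    ∃ p, i ≤ p ∧ p ≤ n ∧ epsGt1 u n p ∧ ∀ j, i ≤ j → j < p → u (j + 1) - u j = 1 := by
  classical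
  have hex : ∃ p, i ≤ p ∧ epsGt1 u n p := ⟨n, hin, Or.inl rfl⟩
  refine ⟨Nat.find hex, (Nat.find_spec hex).1, Nat.find_min' hex ⟨hin, Or.inl rfl⟩,
    (Nat.find_spec hex).2, fun j hij hjp => ?_⟩
  have hjn : j < n := hjp.trans_le (Nat.find_min' hex ⟨hin, Or.inl rfl⟩)
  have hj := Nat.find_min hex hjp
  simp only [epsGt1, not_and, not_or] at hj
  have := hmono j (by omega) hjn
  have := (hj hij).2
  omega

theorem exists_thetaGt1_le (hmono : ∀ i, 1 ≤ i → i + 1 ≤ n → u i < u (i + 1))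
    {i : ℕ} (hi : 1 ≤ i) (hin : i ≤ n) :
    ∃ q, 1 ≤ q ∧ q ≤ i ∧ thetaGt1 u q ∧ ∀ j, q ≤ j → j < i → u (j + 1) - u j = 1 := by
  classical
  have hP : 1 ≤ 1 ∧ thetaGt1 u 1 := ⟨le_rfl, Or.inl rfl⟩
  have hspec := Nat.findGreatest_spec (P := fun q => 1 ≤ q ∧ thetaGt1 u q) hi hP
  refine ⟨Nat.findGreatest _ i, hspec.1, Nat.findGreatest_le i, hspec.2, fun j hqj hji => ?_⟩
  have hj := Nat.findGreatest_is_greatest (P := fun q => 1 ≤ q ∧ thetaGt1 u q)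
    (n := i) (k := j + 1) (by omega) (by omega)
  simp only [thetaGt1, not_and, not_or, Nat.add_sub_cancel] at hj
  have := hmono j (by omega) (by omega)
  have := (hj (by omega)).2
  omega

theorem eq_of_descent {ι : Type*} (μ : ι → ℕ) (P : ι → Prop) (f : ι → ℤ) (c : ι)
    (h : ∀ i, P i → i ≠ c → ∃ j, P j ∧ μ j < μ i ∧ f j = f i) : ∀ i, P i → f i = f c := by
  intro i
  induction hμ : μ i using Nat.strong_induction_on generalizing i with
  | _ k ih =>
    intro hi
    by_cases hic : i = c
    · rw [hic]
    obtain ⟨j, hj, hji, hfj⟩ := h i hi hic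
    rw [← hfj]
    exact ih (μ j) (hμ ▸ hji) j rfl hj

end Sequences

section Coordinates

variable {n : ℕ} {u v : ℕ → ℤ}

theorem atuple_of_lt {i t : ℕ} {j : ℤ} (ht1 : 1 ≤ t) (htn : t ≤ n) (hti : t < i) :
    atuple u n i j t = u t := by
  simp [atuple, ht1, htn, hti]

theorem atuple_of_ge {i t : ℕ} {j : ℤ} (ht1 : 1 ≤ t) (htn : t ≤ n) (hit : i ≤ t) :
    atuple u n i j t = max (j + ((t : ℤ) - i)) (u t) := by
  simp [atuple, ht1, htn, Nat.not_lt.mpr hit]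

end Coordinates

namespace PL

variable {n : ℕ} {u v : ℕ → ℤ}

noncomputable def row (x : PL n u v) : ℕ := x.2.choose

noncomputable def col (x : PL n u v) : ℤ := x.2.choose_spec.choose

theorem row_col_spec (x : PL n u v) :
    1 ≤ row x ∧ row x ≤ n ∧ u (row x) + 1 ≤ col x ∧ col x ≤ v (row x) ∧
      x.1 = atuple u n (row x) (col x) :=
  x.2.choose_spec.choose_spec

theorem le_iff {x y : PL n u v} :
    x ≤ y ↔ row y ≤ row x ∧ col x - row x ≤ col y - row y := by
  obtain ⟨hx1, hxn, hxu, -, hx⟩ := row_col_spec x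
  rw [← Subtype.coe_le_coe, hx, (row_col_spec y).2.2.2.2]
  exact atuple_le_atuple_iff hx1 hxn (by omega)

theorem eq_iff {x y : PL n u v} : x = y ↔ row x = row y ∧ col x = col y := by
  rw [le_antisymm_iff, le_iff, le_iff]
  omega

theorem exists_row_col_eq {i : ℕ} {j : ℤ} (h : 1 ≤ i ∧ i ≤ n ∧ u i + 1 ≤ j ∧ j ≤ v i) :
    ∃ x : PL n u v, row x = i ∧ col x = j := by
  let x : PL n u v := ⟨atuple u n i j, i, j, h.1, h.2.1, h.2.2.1, h.2.2.2, rfl⟩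
  obtain ⟨hx1, hxn, hxu, -, hx⟩ := row_col_spec x
  have hle := (atuple_le_atuple_iff hx1 hxn (by omega)).mp hx.symm.le
  have hge := (atuple_le_atuple_iff h.1 h.2.1 (by omega)).mp hx.le
  exact ⟨x, by omega, by omega⟩

noncomputable def rank (x : PL n u v) : ℤ := col x - 2 * row x

theorem rank_strictMono : StrictMono (rank : PL n u v → ℤ) := fun x y hxy => by
  have := le_iff.mp hxy.le
  have := eq_iff.not.mp hxy.ne
  unfold rank
  omega

theorem exists_lt_lt_of_rank_add_two_le
    (humono : ∀ i, 1 ≤ i → i + 1 ≤ n → u i < u (i + 1))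
    (hvmono : ∀ i, 1 ≤ i → i + 1 ≤ n → v i < v (i + 1))
    {x y : PL n u v} (hxy : x < y) (hgap : rank x + 2 ≤ rank y) : ∃ c, x < c ∧ c < y := by
  obtain ⟨hx1, hxn, hxu, hxv, -⟩ := row_col_spec x
  obtain ⟨hy1, hyn, hyu, hyv, -⟩ := row_col_spec y
  have hle := le_iff.mp hxy.le
  unfold rank at hgap
  obtain ⟨i, j, hij, hyi, hix, hxij, hijy, hrx, hry⟩ : ∃ i j,
      (1 ≤ i ∧ i ≤ n ∧ u i + 1 ≤ j ∧ j ≤ v i) ∧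
      row y ≤ i ∧ i ≤ row x ∧ col x - row x ≤ j - i ∧ j - i ≤ col y - row y ∧
      col x - 2 * row x < j - 2 * i ∧ j - 2 * i < col y - 2 * row y := by
    -- go one step up the row of `x`, else one row up along the diagonal of `x` if `y` lies on
    -- it, else to the point of the row of `y` on that diagonal
    by_cases hrow : row y = row x
    · rw [hrow] at hyv
      exact ⟨row x, col x + 1, by omega⟩
    have hu := sub_le_sub_of_increasing humono hy1 (le_of_lt (by omega)) hxn
    by_cases hdiag : col x - row x = col y - row y
    · have hu' := sub_le_sub_of_increasing humono (a := row y + 1) (by omega) (by omega) hxn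
      have hv := hvmono (row y) hy1 (by omega)
      exact ⟨row y + 1, col x - row x + (row y + 1 : ℕ), by omega⟩
    · exact ⟨row y, col x - row x + row y, by omega⟩
  obtain ⟨c, rfl, rfl⟩ := exists_row_col_eq hij
  refine ⟨c, lt_of_le_of_ne (le_iff.mpr ⟨hix, hxij⟩) ?_,
    lt_of_le_of_ne (le_iff.mpr ⟨hyi, hijy⟩) ?_⟩
  all_goals rw [Ne, eq_iff]; omega

theorem rank_eq_add_one_of_covBy
    (humono : ∀ i, 1 ≤ i → i + 1 ≤ n → u i < u (i + 1))
    (hvmono : ∀ i, 1 ≤ i → i + 1 ≤ n → v i < v (i + 1))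
    {x y : PL n u v} (hxy : x ⋖ y) : rank y = rank x + 1 := by
  have := rank_strictMono hxy.lt
  by_contra hne
  obtain ⟨c, hxc, hcy⟩ := exists_lt_lt_of_rank_add_two_le humono hvmono hxy.lt (by omega)
  exact hxy.2 hxc hcy

noncomputable abbrev gradeOrder
    (humono : ∀ i, 1 ≤ i → i + 1 ≤ n → u i < u (i + 1))
    (hvmono : ∀ i, 1 ≤ i → i + 1 ≤ n → v i < v (i + 1)) : GradeOrder ℤ (PL n u v) where
  grade := rank
  grade_strictMono := rank_strictMono
  covBy_grade _ _ hxy := Order.covBy_iff_add_one_eq.mpr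
    (rank_eq_add_one_of_covBy humono hvmono hxy).symm

instance : Finite (PL n u v) := by
  have : PL n u v ⊆ ⋃ i ∈ Finset.Icc 1 n, atuple u n i '' Set.Icc (u i + 1) (v i) := by
    rintro x ⟨i, j, hi, hin, hij, hji, rfl⟩
    exact Set.mem_biUnion (Finset.mem_Icc.mpr ⟨hi, hin⟩) ⟨j, ⟨hij, hji⟩, rfl⟩
  exact ((Finset.Icc 1 n).finite_toSet.biUnion fun i _ => (Set.finite_Icc _ _).image _).subset
    this |>.to_subtype

theorem isMin_iff (humono : ∀ i, 1 ≤ i → i + 1 ≤ n → u i < u (i + 1))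
    (huv : ∀ i, 1 ≤ i → i ≤ n → u i < v i) {x : PL n u v} :
    IsMin x ↔ col x = u (row x) + 1 ∧ epsGt1 u n (row x) := by
  obtain ⟨hx1, hxn, hxu, hxv, -⟩ := row_col_spec x
  constructor
  · intro hmin
    have hbelow : ∀ i j, (1 ≤ i ∧ i ≤ n ∧ u i + 1 ≤ j ∧ j ≤ v i) → row x ≤ i →
        j - i ≤ col x - row x → i = row x ∧ j = col x := by
      intro i j hij hi hj
      obtain ⟨y, rfl, rfl⟩ := exists_row_col_eq hij
      have hyx : y ≤ x := le_iff.mpr ⟨hi, hj⟩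
      exact eq_iff.mp (le_antisymm hyx (hmin hyx))
    have hcol : col x = u (row x) + 1 := by
      by_contra
      have := hbelow (row x) (col x - 1) ⟨hx1, hxn, by omega, by omega⟩ le_rfl (by omega)
      omega
    refine ⟨hcol, ?_⟩
    by_contra heps
    simp only [epsGt1, not_or] at heps
    have := humono (row x) hx1 (by omega)
    have := huv (row x + 1) (by omega) (by omega)
    have := hbelow (row x + 1) (u (row x + 1) + 1) ⟨by omega, by omega, le_rfl, by omega⟩
      (by omega) (by omega)
    omega
  · rintro ⟨hcol, heps⟩ y hyx
    obtain ⟨hy1, hyn, hyu, hyv, -⟩ := row_col_spec y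
    have hle := le_iff.mp hyx
    have hrow : row y = row x := by
      by_contra hne
      rcases heps with h | h
      · omega
      have := sub_le_sub_of_increasing humono (a := row x + 1) (by omega) (by omega) hyn
      omega
    exact (eq_iff.mpr ⟨hrow, by rw [hrow] at hyu; omega⟩).ge

theorem isMax_iff (hvmono : ∀ i, 1 ≤ i → i + 1 ≤ n → v i < v (i + 1))
    (huv : ∀ i, 1 ≤ i → i ≤ n → u i < v i) {x : PL n u v} :
    IsMax x ↔ col x = v (row x) ∧ thetaGt1 v (row x) := by
  obtain ⟨hx1, hxn, hxu, hxv, -⟩ := row_col_spec x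
  constructor
  · intro hmax
    have habove : ∀ i j, (1 ≤ i ∧ i ≤ n ∧ u i + 1 ≤ j ∧ j ≤ v i) → i ≤ row x →
        col x - row x ≤ j - i → i = row x ∧ j = col x := by
      intro i j hij hi hj
      obtain ⟨y, rfl, rfl⟩ := exists_row_col_eq hij
      have hxy : x ≤ y := le_iff.mpr ⟨hi, hj⟩
      exact eq_iff.mp (le_antisymm (hmax hxy) hxy)
    have hcol : col x = v (row x) := by
      by_contra
      have := habove (row x) (col x + 1) ⟨hx1, hxn, by omega, by omega⟩ le_rfl (by omega)
      omega
    refine ⟨hcol, ?_⟩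
    by_contra htheta
    simp only [thetaGt1, not_or] at htheta
    have hstep := hvmono (row x - 1) (by omega) (by omega)
    rw [Nat.sub_add_cancel hx1] at hstep
    have := huv (row x - 1) (by omega) (by omega)
    have := habove (row x - 1) (v (row x - 1)) ⟨by omega, by omega, by omega, le_rfl⟩
      (by omega) (by omega)
    omega
  · rintro ⟨hcol, htheta⟩ y hxy
    obtain ⟨hy1, hyn, hyu, hyv, -⟩ := row_col_spec y
    have hle := le_iff.mp hxy
    have hrow : row y = row x := by
      by_contra hne
      rcases htheta with h | h
      · omega
      have := sub_le_sub_of_increasing hvmono hy1 (b := row x - 1) (by omega) (by omega)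
      have hstep := hvmono (row x - 1) (by omega) (by omega)
      rw [Nat.sub_add_cancel hx1] at hstep
      omega
    exact (eq_iff.mpr ⟨hrow, by rw [hrow] at hyv; omega⟩).le

end PL

section Criterion

variable {n : ℕ} {u v : ℕ → ℤ}

open PL

/-- `p` and `q` index the minimal element `a_{p, u_p + 1}` and the maximal element `a_{q, v_q}`
of `P_𝓛`, and the two are comparable. -/
def IsExtremePair (n : ℕ) (u v : ℕ → ℤ) (p q : ℕ) : Prop :=
  1 ≤ q ∧ q ≤ p ∧ p ≤ n ∧ epsGt1 u n p ∧ thetaGt1 v q ∧ u p - p < v q - q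

theorem PL.isMin_isMax_le_iff
    (humono : ∀ i, 1 ≤ i → i + 1 ≤ n → u i < u (i + 1))
    (hvmono : ∀ i, 1 ≤ i → i + 1 ≤ n → v i < v (i + 1))
    (huv : ∀ i, 1 ≤ i → i ≤ n → u i < v i) {a b : PL n u v} :
    IsMin a ∧ IsMax b ∧ a ≤ b ↔
      col a = u (row a) + 1 ∧ col b = v (row b) ∧ IsExtremePair n u v (row a) (row b) := by
  obtain ⟨-, han, -, -, -⟩ := row_col_spec a
  rw [isMin_iff humono huv, isMax_iff hvmono huv, le_iff, IsExtremePair]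
  constructor
  · rintro ⟨⟨hca, hpa⟩, ⟨hcb, hqb⟩, hrow, hdiag⟩
    exact ⟨hca, hcb, (row_col_spec b).1, hrow, han, hpa, hqb, by omega⟩
  · rintro ⟨hca, hcb, -, hrow, -, hpa, hqb, hdiag⟩
    exact ⟨⟨hca, hpa⟩, ⟨hcb, hqb⟩, hrow, by omega⟩

theorem isPure_PL_iff
    (humono : ∀ i, 1 ≤ i → i + 1 ≤ n → u i < u (i + 1))
    (hvmono : ∀ i, 1 ≤ i → i + 1 ≤ n → v i < v (i + 1))
    (huv : ∀ i, 1 ≤ i → i ≤ n → u i < v i) :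
    IsPure (PL n u v) ↔ ∀ p q p' q', IsExtremePair n u v p q → IsExtremePair n u v p' q' →
      v q - 2 * q + (2 * p - u p) = v q' - 2 * q' + (2 * p' - u p') := by
  let _ := gradeOrder humono hvmono
  have hext {p q} (hpq : IsExtremePair n u v p q) : ∃ a b : PL n u v,
      IsMin a ∧ IsMax b ∧ a ≤ b ∧ rank b - rank a = v q - 2 * q - (u p + 1 - 2 * p) := by
    have ⟨hq1, hqp, hpn, _⟩ := hpq
    obtain ⟨a, rfl, hca⟩ : ∃ a : PL n u v, row a = p ∧ col a = u p + 1 :=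
      exists_row_col_eq ⟨by omega, hpn, le_rfl, by linarith [huv p (by omega) hpn]⟩
    obtain ⟨b, rfl, hcb⟩ : ∃ b : PL n u v, row b = q ∧ col b = v q :=
      exists_row_col_eq ⟨hq1, by omega, by linarith [huv q hq1 (by omega)], le_rfl⟩
    obtain ⟨ha, hb, hab⟩ := (isMin_isMax_le_iff humono hvmono huv).mpr ⟨hca, hcb, hpq⟩
    exact ⟨a, b, ha, hb, hab, by unfold rank; omega⟩
  rw [isPure_iff_grade_sub_eq]
  constructor
  · intro h p q p' q' hpq hpq'
    obtain ⟨a, b, ha, hb, hab, hlen⟩ := hext hpq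
    obtain ⟨c, d, hc, hd, hcd, hlen'⟩ := hext hpq'
    have := h a b c d ha hb hab hc hd hcd
    change rank b - rank a = rank d - rank c at this
    omega
  · intro h a b c d ha hb hab hc hd hcd
    obtain ⟨hca, hcb, hab'⟩ := (isMin_isMax_le_iff humono hvmono huv).mp ⟨ha, hb, hab⟩
    obtain ⟨hcc, hcd, hcd'⟩ := (isMin_isMax_le_iff humono hvmono huv).mp ⟨hc, hd, hcd⟩
    have := h _ _ _ _ hab' hcd'
    change rank b - rank a = rank d - rank c
    unfold rank
    omega

end Criterion

section Conditions

variable {n : ℕ} {u v : ℕ → ℤ}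

/-- Condition (a), with `ε_i = u (i + 1) - u i`. -/
def EpsCondition (n : ℕ) (u : ℕ → ℤ) : Prop :=
  ∀ i : ℕ, 1 ≤ i → i + 1 ≤ n → 1 < u (i + 1) - u i →
    ((i : ℤ) + (u (i + 1) - u i) - 1 ≤ (n : ℤ) ∧
     (∀ j : ℕ, (i : ℤ) < (j : ℤ) → (j : ℤ) < (i : ℤ) + (u (i + 1) - u i) - 1 →
        u (j + 1) - u j = 1) ∧
     ((i : ℤ) + (u (i + 1) - u i) - 1 = (n : ℤ) ∨
      1 < u (((i : ℤ) + (u (i + 1) - u i) - 1).toNat + 1) -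
           u (((i : ℤ) + (u (i + 1) - u i) - 1).toNat)))

/-- Condition (b), with `θ_i = v (i + 1) - v i`. -/
def ThetaCondition (n : ℕ) (v : ℕ → ℤ) : Prop :=
  ∀ i : ℕ, 1 ≤ i → i + 1 ≤ n → 1 < v (i + 1) - v i →
    (0 ≤ (i : ℤ) - (v (i + 1) - v i) + 1 ∧
     (∀ j : ℕ, (i : ℤ) - (v (i + 1) - v i) + 1 < (j : ℤ) → (j : ℤ) < (i : ℤ) →
        v (j + 1) - v j = 1) ∧
     ((i : ℤ) - (v (i + 1) - v i) + 1 = 0 ∨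
      1 < v (((i : ℤ) - (v (i + 1) - v i) + 1).toNat + 1) -
           v (((i : ℤ) - (v (i + 1) - v i) + 1).toNat)))

theorem two_mul_sub_eq_of_epsCondition (h : EpsCondition n u) {p : ℕ} (hp1 : 1 ≤ p)
    (hpn : p ≤ n) (hp : epsGt1 u n p) :
    2 * p - u p = 2 * n - u n := by
  refine eq_of_descent (fun i => n - i) (fun i => 1 ≤ i ∧ i ≤ n ∧ epsGt1 u n i)
    (fun i : ℕ => 2 * (i : ℤ) - u i) n ?_ p ⟨hp1, hpn, hp⟩
  rintro i ⟨hi1, hin, hi | hi⟩ hne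
  · exact absurd hi hne
  obtain ⟨hle, hsteps, hnext⟩ := h i hi1 (by omega) hi
  obtain ⟨k, hk⟩ : ∃ k : ℕ, (k : ℤ) = i + (u (i + 1) - u i) - 1 :=
    ⟨_, Int.toNat_of_nonneg (by omega)⟩
  rw [← hk] at hle hsteps hnext
  have htel := sub_eq_sub_of_unit_steps (u := u) (a := i + 1) (b := k) (by omega)
    fun j hij hjk => hsteps j (by omega) (by omega)
  refine ⟨k, ⟨by omega, by omega, ?_⟩, by omega, by push_cast at htel ⊢; omega⟩
  rcases hnext with hkn | hkn
  · exact Or.inl (by omega)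
  · exact Or.inr (by simpa using hkn)

theorem sub_two_mul_eq_of_thetaCondition (h : ThetaCondition n v) {q : ℕ} (hq1 : 1 ≤ q)
    (hqn : q ≤ n) (hq : thetaGt1 v q) :
    v q - 2 * q = v 1 - 2 := by
  refine eq_of_descent id (fun i => 1 ≤ i ∧ i ≤ n ∧ thetaGt1 v i)
    (fun i : ℕ => v i - 2 * (i : ℤ)) 1 ?_ q ⟨hq1, hqn, hq⟩
  rintro i ⟨hi1, hin, hi | hi⟩ hne
  · exact absurd hi hne
  obtain ⟨hle, hsteps, hprev⟩ := h (i - 1) (by omega) (by omega) (by rwa [Nat.sub_add_cancel hi1])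
  rw [Nat.sub_add_cancel hi1] at hle hsteps hprev
  obtain ⟨k, hk⟩ : ∃ k : ℕ, (k : ℤ) = ((i - 1 : ℕ) : ℤ) - (v i - v (i - 1)) + 1 :=
    ⟨_, Int.toNat_of_nonneg hle⟩
  rw [← hk] at hsteps hprev
  have htel := sub_eq_sub_of_unit_steps (u := v) (a := k + 1) (b := i - 1) (by omega)
    fun j hij hji => hsteps j (by omega) (by omega)
  refine ⟨k + 1, ⟨by omega, by omega, ?_⟩, by simp only [id]; omega, by push_cast at htel ⊢; omega⟩
  rcases hprev with hk0 | hk0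
  · exact Or.inl (by omega)
  · exact Or.inr (by simpa using hk0)

theorem epsCondition_of_extremePairs
    (humono : ∀ i, 1 ≤ i → i + 1 ≤ n → u i < u (i + 1))
    (hvmono : ∀ i, 1 ≤ i → i + 1 ≤ n → v i < v (i + 1))
    (huv : ∀ i, 1 ≤ i → i ≤ n → u i < v i) (hcn : ∀ i, 1 ≤ i → i + 1 ≤ n → u (i + 1) ≤ v i)
    (h : ∀ p q p' q', IsExtremePair n u v p q → IsExtremePair n u v p' q' →
      v q - 2 * q + (2 * p - u p) = v q' - 2 * q' + (2 * p' - u p')) :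
    EpsCondition n u := by
  intro i hi1 hin hi
  obtain ⟨f, hf1, hfi, hf, hfsteps⟩ := exists_thetaGt1_le hvmono hi1 (by omega)
  obtain ⟨p, hip, hpn, hp, hpsteps⟩ := exists_epsGt1_ge humono (i := i + 1) (by omega) hin
  have htf := sub_eq_sub_of_unit_steps hfi hfsteps
  have htp := sub_eq_sub_of_unit_steps hip hpsteps
  have := h i f p f ⟨hf1, hfi, by omega, Or.inr hi, hf, by linarith [huv i hi1 (by omega)]⟩
    ⟨hf1, by omega, hpn, hp, hf, by push_cast at htp; linarith [hcn i hi1 hin]⟩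
  have hp_eq : (p : ℤ) = i + (u (i + 1) - u i) - 1 := by push_cast at htp; omega
  refine ⟨by omega, fun j hij hjp => hpsteps j (by omega) (by omega), ?_⟩
  rw [← hp_eq, Int.toNat_natCast]
  rcases hp with hpn | hp
  · exact Or.inl (by omega)
  · exact Or.inr hp

theorem thetaCondition_of_extremePairs
    (humono : ∀ i, 1 ≤ i → i + 1 ≤ n → u i < u (i + 1))
    (hvmono : ∀ i, 1 ≤ i → i + 1 ≤ n → v i < v (i + 1))
    (hcn : ∀ i, 1 ≤ i → i + 1 ≤ n → u (i + 1) ≤ v i)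
    (h : ∀ p q p' q', IsExtremePair n u v p q → IsExtremePair n u v p' q' →
      v q - 2 * q + (2 * p - u p) = v q' - 2 * q' + (2 * p' - u p')) :
    ThetaCondition n v := by
  intro i hi1 hin hi
  obtain ⟨f, hf1, hfi, hf, hfsteps⟩ := exists_thetaGt1_le hvmono hi1 (by omega)
  obtain ⟨p, hip, hpn, hp, hpsteps⟩ := exists_epsGt1_ge humono (i := i + 1) (by omega) hin
  have htf := sub_eq_sub_of_unit_steps hfi hfsteps
  have htp := sub_eq_sub_of_unit_steps hip hpsteps
  have hcni := hcn i hi1 hin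
  have := h p (i + 1) p f
    ⟨by omega, hip, hpn, hp, Or.inr (by simpa using hi), by push_cast at htp ⊢; omega⟩
    ⟨hf1, by omega, hpn, hp, hf, by push_cast at htp; omega⟩
  have hf_eq : (f : ℤ) - 1 = i - (v (i + 1) - v i) + 1 := by push_cast at this; omega
  refine ⟨by omega, fun j hij hji => hfsteps j (by omega) (by omega), ?_⟩
  rw [← hf_eq, show ((f : ℤ) - 1).toNat = f - 1 by omega, Nat.sub_add_cancel hf1]
  rcases hf with hf | hf
  · exact Or.inl (by omega)
  · exact Or.inr hf

end Conditions

theorem stmt13_general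
    (n : ℕ) (u v : ℕ → ℤ)
    (humono : ∀ i, 1 ≤ i → i + 1 ≤ n → u i < u (i + 1))
    (hvmono : ∀ i, 1 ≤ i → i + 1 ≤ n → v i < v (i + 1))
    (huv : ∀ i, 1 ≤ i → i ≤ n → u i < v i)
    (hcn : ∀ i, 1 ≤ i → i + 1 ≤ n → u (i + 1) ≤ v i) :
    IsPure ↥(PL n u v) ↔
      ((∀ i : ℕ, 1 ≤ i → i + 1 ≤ n → 1 < u (i + 1) - u i →
          ((i : ℤ) + (u (i + 1) - u i) - 1 ≤ (n : ℤ) ∧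
           (∀ j : ℕ, (i : ℤ) < (j : ℤ) → (j : ℤ) < (i : ℤ) + (u (i + 1) - u i) - 1 →
              u (j + 1) - u j = 1) ∧
           ((i : ℤ) + (u (i + 1) - u i) - 1 = (n : ℤ) ∨
            1 < u (((i : ℤ) + (u (i + 1) - u i) - 1).toNat + 1) -
                 u (((i : ℤ) + (u (i + 1) - u i) - 1).toNat)))) ∧
       (∀ i : ℕ, 1 ≤ i → i + 1 ≤ n → 1 < v (i + 1) - v i →
          (0 ≤ (i : ℤ) - (v (i + 1) - v i) + 1 ∧
           (∀ j : ℕ, (i : ℤ) - (v (i + 1) - v i) + 1 < (j : ℤ) → (j : ℤ) < (i : ℤ) →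
              v (j + 1) - v j = 1) ∧
           ((i : ℤ) - (v (i + 1) - v i) + 1 = 0 ∨
            1 < v (((i : ℤ) - (v (i + 1) - v i) + 1).toNat + 1) -
                 v (((i : ℤ) - (v (i + 1) - v i) + 1).toNat))))) := by
  change _ ↔ EpsCondition n u ∧ ThetaCondition n v
  rw [isPure_PL_iff humono hvmono huv]
  constructor
  · intro h
    exact ⟨epsCondition_of_extremePairs humono hvmono huv hcn h,
      thetaCondition_of_extremePairs humono hvmono hcn h⟩
  · rintro ⟨ha, hb⟩ p q p' q' ⟨hq1, hqp, hpn, hp, hq, -⟩ ⟨hq1', hqp', hpn', hp', hq', -⟩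
    rw [two_mul_sub_eq_of_epsCondition ha (by omega) hpn hp,
      two_mul_sub_eq_of_epsCondition ha (by omega) hpn' hp',
      sub_two_mul_eq_of_thetaCondition hb hq1 (by omega) hq,
      sub_two_mul_eq_of_thetaCondition hb hq1' (by omega) hq']

theorem stmt13
    (n m : ℕ) (u v : ℕ → ℤ)
    (hn : 1 ≤ n) (hnm : n < m)
    (hu1 : u 1 = 1)
    (humono : ∀ i, 1 ≤ i → i + 1 ≤ n → u i < u (i + 1))
    (hum : u n < (m : ℤ))
    (hv1 : 1 < v 1)
    (hvmono : ∀ i, 1 ≤ i → i + 1 ≤ n → v i < v (i + 1))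
    (hvn : v n = (m : ℤ))
    (huv : ∀ i, 1 ≤ i → i ≤ n → u i < v i)
    (hstep : ∀ i, 1 ≤ i → i + 1 ≤ n → u (i + 1) ≤ v i + 1)
    (hcn : ∀ i, 1 ≤ i → i + 1 ≤ n → u (i + 1) ≤ v i) :
    IsPure ↥(PL n u v) ↔
      ((∀ i : ℕ, 1 ≤ i → i + 1 ≤ n → 1 < u (i + 1) - u i →
          ((i : ℤ) + (u (i + 1) - u i) - 1 ≤ (n : ℤ) ∧
           (∀ j : ℕ, (i : ℤ) < (j : ℤ) → (j : ℤ) < (i : ℤ) + (u (i + 1) - u i) - 1 →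
              u (j + 1) - u j = 1) ∧
           ((i : ℤ) + (u (i + 1) - u i) - 1 = (n : ℤ) ∨
            1 < u (((i : ℤ) + (u (i + 1) - u i) - 1).toNat + 1) -
                 u (((i : ℤ) + (u (i + 1) - u i) - 1).toNat)))) ∧
       (∀ i : ℕ, 1 ≤ i → i + 1 ≤ n → 1 < v (i + 1) - v i →
          (0 ≤ (i : ℤ) - (v (i + 1) - v i) + 1 ∧
           (∀ j : ℕ, (i : ℤ) - (v (i + 1) - v i) + 1 < (j : ℤ) → (j : ℤ) < (i : ℤ) →
              v (j + 1) - v j = 1) ∧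
           ((i : ℤ) - (v (i + 1) - v i) + 1 = 0 ∨
            1 < v (((i : ℤ) - (v (i + 1) - v i) + 1).toNat + 1) -
                 v (((i : ℤ) - (v (i + 1) - v i) + 1).toNat))))) :=
  stmt13_general n u v humono hvmono huv hcn

end LadderPaper
end
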